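/- arXiv:1911.07180 — 2 statements merged into one kernel-verified Lean document; each statement's English description precedes it below -/
import Mathlib

section
/- Let g(Δρ,Δs) = (s+Δs)/‖ρ−r+Δρ‖^α − (s+Δs)/‖ρ−r‖^α + α·s·(ρ−r)ᵀΔρ/‖ρ−r‖^{α+2}, where ρ,r ∈ ℝ^d with ρ ≠ r, s > 0, α > 0. Then (Δs,Δρ)=(0,0) is the unique critical point of g on the open set {(Δs,Δρ) : s+Δs>0, ρ−r+Δρ ≠ 0}, i.e. the unique point where both partial derivatives ∂g/∂Δs and the gradient ∇_{Δρ} g vanish. -/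
/-! With `v = ρ - r` and `w = v + Δρ`, the differential of `g` at `(Δs, Δρ)` is
`(‖w‖^(-α) - ‖v‖^(-α)) dΔs + α ⟪s ‖v‖^(-α-2) v - (s + Δs) ‖w‖^(-α-2) w, dΔρ⟫`.
The first coefficient vanishes iff `‖w‖ = ‖v‖`; then the second forces `(s + Δs) w = s v`,
and comparing norms of both sides gives `s + Δs = s`, hence `w = v`. -/

open scoped RealInnerProductSpace
open ContinuousLinearMap

variable {E : Type*} [NormedAddCommGroup E] [InnerProductSpace ℝ E]

theorem hasFDerivAt_norm_rpow_of_ne_zero (p : ℝ) {x : E} (hx : x ≠ 0) :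
    HasFDerivAt (fun x : E ↦ ‖x‖ ^ p) ((p * ‖x‖ ^ (p - 2)) • innerSL ℝ x) x := by
  apply HasStrictFDerivAt.hasFDerivAt
  convert! (hasStrictFDerivAt_norm_sq x).rpow_const (p := p / 2) (by simp [hx]) using 0
  simp_rw [← Real.rpow_natCast_mul (norm_nonneg _), ← Nat.cast_smul_eq_nsmul ℝ, smul_smul]
  ring_nf

theorem smul_fst_add_innerSL_comp_snd_eq_zero_iff (c : ℝ) (u : E) :
    c • fst ℝ ℝ E + (innerSL ℝ u).comp (snd ℝ ℝ E) = 0 ↔ c = 0 ∧ u = 0 := by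
  constructor
  · intro h
    have hc := congr($h (1, 0))
    have hu := congr($h (0, u))
    simp only [add_apply, smul_apply, coe_fst', coe_snd', coe_comp, Function.comp_apply,
      innerSL_apply_apply, smul_eq_mul, zero_apply, inner_zero_right, mul_one, add_zero,
      mul_zero, zero_add, inner_self_eq_zero] at hc hu
    exact ⟨hc, hu⟩
  · rintro ⟨rfl, rfl⟩
    simp

theorem eq_of_smul_eq_smul_of_norm_eq {F : Type*} [NormedAddCommGroup F] [NormedSpace ℝ F]
    {s t : ℝ} {v w : F} (hs : 0 < s) (ht : 0 < t) (hv : v ≠ 0) (hnorm : ‖w‖ = ‖v‖)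
    (h : t • w = s • v) : t = s ∧ w = v := by
  have hts : t = s := by
    have := congr(‖$h‖)
    rw [norm_smul, norm_smul, hnorm, Real.norm_of_nonneg ht.le, Real.norm_of_nonneg hs.le] at this
    exact mul_right_cancel₀ (norm_ne_zero_iff.mpr hv) this
  subst hts
  exact ⟨rfl, smul_right_injective F ht.ne' h⟩

/-- `energyRemainder (ρ - r) s α (Δs, Δρ)` is the remainder `g(Δρ, Δs)`. -/
noncomputable def energyRemainder (v : E) (s α : ℝ) (p : ℝ × E) : ℝ :=
  (s + p.1) / ‖v + p.2‖ ^ α - (s + p.1) / ‖v‖ ^ α + α * s * ⟪v, p.2⟫ / ‖v‖ ^ (α + 2)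

theorem energyRemainder_eq (v : E) (s α : ℝ) :
    energyRemainder v s α = fun p ↦
      (s + p.1) * ‖v + p.2‖ ^ (-α) - (s + p.1) * ‖v‖ ^ (-α)
        + α * s * ‖v‖ ^ (-α - 2) * ⟪v, p.2⟫ := by
  ext p
  rw [show -α - 2 = -(α + 2) by ring]
  simp only [energyRemainder, Real.rpow_neg (norm_nonneg _), div_eq_mul_inv]
  ring

theorem hasFDerivAt_energyRemainder (v : E) (s α : ℝ) {a : ℝ} {h : E} (hw : v + h ≠ 0) :
    HasFDerivAt (energyRemainder v s α)
      ((‖v + h‖ ^ (-α) - ‖v‖ ^ (-α)) • fst ℝ ℝ E + (innerSL ℝ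
        ((α * s * ‖v‖ ^ (-α - 2)) • v - (α * (s + a) * ‖v + h‖ ^ (-α - 2)) • (v + h))).comp
          (snd ℝ ℝ E)) (a, h) := by
  have hshift : HasFDerivAt (fun p : ℝ × E ↦ v + p.2) (snd ℝ ℝ E) (a, h) :=
    hasFDerivAt_snd.const_add v
  have hpow := (hasFDerivAt_norm_rpow_of_ne_zero (-α) hw).comp (a, h) hshift
  have hmass : HasFDerivAt (fun p : ℝ × E ↦ s + p.1) (fst ℝ ℝ E) (a, h) :=
    hasFDerivAt_fst.const_add s
  have hlin : HasFDerivAt (fun p : ℝ × E ↦ ⟪v, p.2⟫) ((innerSL ℝ v).comp (snd ℝ ℝ E)) (a, h) :=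
    ((innerSL ℝ v).comp (snd ℝ ℝ E)).hasFDerivAt
  rw [energyRemainder_eq]
  refine (((hmass.mul hpow).sub (hmass.mul_const (‖v‖ ^ (-α)))).add
    (hlin.const_mul (α * s * ‖v‖ ^ (-α - 2)))).congr_fderiv ?_
  ext k
  · simp
  · simp
    ring

theorem fderiv_energyRemainder_eq_zero_iff {v : E} {s α a : ℝ} {h : E} (hv : v ≠ 0)
    (hs : 0 < s) (hα : α ≠ 0) (ht : 0 < s + a) (hw : v + h ≠ 0) :
    fderiv ℝ (energyRemainder v s α) (a, h) = 0 ↔ (a, h) = (0, 0) := by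
  rw [(hasFDerivAt_energyRemainder v s α hw).fderiv, smul_fst_add_innerSL_comp_snd_eq_zero_iff]
  constructor
  · rintro ⟨hscale, hdir⟩
    have hnorm : ‖v + h‖ = ‖v‖ :=
      (Real.rpow_left_inj (norm_nonneg _) (norm_nonneg _) (neg_ne_zero.mpr hα)).mp
        (sub_eq_zero.mp hscale)
    rw [hnorm] at hdir
    have hsmul : (s + a) • (v + h) = s • v := by
      have hc : α * ‖v‖ ^ (-α - 2) ≠ 0 :=
        mul_ne_zero hα (Real.rpow_pos_of_pos (norm_pos_iff.mpr hv) _).ne'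
      apply smul_right_injective E hc
      linear_combination (norm := module) -hdir
    obtain ⟨hts, hwv⟩ := eq_of_smul_eq_smul_of_norm_eq hs ht hv hnorm hsmul
    rw [add_eq_left.mp hts, add_eq_left.mp hwv]
  · intro h0
    obtain ⟨rfl, rfl⟩ := Prod.mk.inj h0
    simp

theorem stmt_3 {d : ℕ} (ρ r : EuclideanSpace ℝ (Fin d)) (hρr : ρ ≠ r)
    (s α : ℝ) (hs : 0 < s) (hα : 0 < α) :
    ∀ (Δs : ℝ) (Δρ : EuclideanSpace ℝ (Fin d)),
      0 < s + Δs → ρ - r + Δρ ≠ 0 →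
      (fderiv ℝ (fun p : ℝ × EuclideanSpace ℝ (Fin d) =>
          (s + p.1) / ‖ρ - r + p.2‖ ^ α - (s + p.1) / ‖ρ - r‖ ^ α
            + α * s * (inner ℝ (ρ - r) p.2 : ℝ) / ‖ρ - r‖ ^ (α + 2)) (Δs, Δρ) = 0
        ↔ (Δs, Δρ) = (0, (0 : EuclideanSpace ℝ (Fin d)))) :=
  fun _ _ ht hw ↦ fderiv_energyRemainder_eq_zero_iff (sub_ne_zero.mpr hρr) hs hα.ne' ht hw
end

section
/- For constants s>0, τ>0, α>0 and S ≥ 0, the function t ↦ H(1,S,t) = (s+S)/(τ+t)^α + α·s·t/τ^{α+1} − (s+S)/τ^α on [0,∞) attains its unique minimum at t* = τ·((1 + S/s)^{1/(α+1)} − 1) ≥ 0. -/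
/-!
With `u = τ + t`, `H(1,S,·)` is, up to a constant, `u ↦ A / u ^ α + B * u` with `A = s + S` and
`B = α s / τ ^ (α + 1)`; its derivative vanishes at `v = τ (1 + S/s) ^ (1/(α+1))`, i.e.
`B * v ^ (α + 1) = α * A`. Strict minimality at `v` is the tangent-line inequality of the convex
map `u ↦ u ^ (-α)` at `v`, which is Bernoulli's inequality `1 + p x < (1 + x) ^ p` for the
negative exponent `p = -α` and `1 + x = u / v`.
-/

open Real

theorem one_add_mul_self_lt_rpow_one_add_of_neg {s p : ℝ} (hs : -1 < s) (hs' : s ≠ 0)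
    (hp : p < 0) : 1 + p * s < (1 + s) ^ p := by
  have hpos : 0 < 1 + s := by linarith
  have hq : 0 < 1 - p := by linarith
  have hne : (1 + s) ^ p ≠ 1 + s := by
    rcases lt_or_gt_of_ne hs' with h | h
    · exact (one_lt_rpow_of_pos_of_lt_one_of_neg hpos (by linarith) hp).trans' (by linarith) |>.ne'
    · exact ((rpow_lt_one_of_one_lt_of_neg (by linarith) hp).trans (by linarith)).ne
  -- weighted AM-GM for `(1 + s) ^ p` and `1 + s`, whose weighted geometric mean is `1`
  have hgm : ((1 + s) ^ p) ^ (1 / (1 - p)) * (1 + s) ^ (-p / (1 - p)) = 1 := by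
    rw [← rpow_mul hpos.le, ← rpow_add hpos]
    convert rpow_zero (1 + s) using 2
    field_simp
    ring
  have hamgm := (geom_mean_lt_arith_mean2_weighted_iff_of_pos (one_div_pos.2 hq)
    (div_pos (neg_pos.2 hp) hq) (rpow_pos_of_pos hpos p).le hpos.le
    (by field_simp; ring)).2 hne
  have hmean : 1 / (1 - p) * (1 + s) ^ p + -p / (1 - p) * (1 + s)
      = ((1 + s) ^ p - p * (1 + s)) / (1 - p) := by
    ring
  rw [hgm, hmean, lt_div_iff₀ hq] at hamgm
  linarith

theorem div_rpow_add_mul_lt_of_critical {A B α u v : ℝ} (hA : 0 < A) (hα : 0 < α) (hu : 0 < u)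
    (hv : 0 < v) (huv : u ≠ v) (hcrit : B * v ^ (α + 1) = α * A) :
    A / v ^ α + B * v < A / u ^ α + B * u := by
  have hvα : 0 < v ^ α := rpow_pos_of_pos hv α
  have hB : B = α * A / (v ^ α * v) := by
    rw [← rpow_add_one hv.ne', ← hcrit]
    field_simp
  have hbern := one_add_mul_self_lt_rpow_one_add_of_neg (s := u / v - 1)
    (by have := div_pos hu hv; linarith) (sub_ne_zero.2 ((div_eq_one_iff_eq hv.ne').not.2 huv))
    (neg_lt_zero.2 hα)
  rw [add_sub_cancel, rpow_neg (div_pos hu hv).le, div_rpow hu.le hv.le, inv_div] at hbern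
  have key := mul_lt_mul_of_pos_left hbern (div_pos hA hvα)
  have hu' : A / v ^ α * (v ^ α / u ^ α) = A / u ^ α := by
    field_simp
  rw [hu'] at key
  rw [hB]
  calc A / v ^ α + α * A / (v ^ α * v) * v
      = A / v ^ α * (1 + -α * (u / v - 1)) + α * A / (v ^ α * v) * u := by
        field_simp
        ring
    _ < A / u ^ α + α * A / (v ^ α * v) * u := by linarith

theorem stmt_6 (s τ α S : ℝ) (hs : 0 < s) (hτ : 0 < τ) (hα : 0 < α)
    (hS : 0 ≤ S) :
    0 ≤ τ * ((1 + S / s) ^ (1 / (α + 1)) - 1) ∧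
    ∀ t ∈ Set.Ici (0 : ℝ), t ≠ τ * ((1 + S / s) ^ (1 / (α + 1)) - 1) →
      (s + S) / (τ + τ * ((1 + S / s) ^ (1 / (α + 1)) - 1)) ^ α
          + α * s * (τ * ((1 + S / s) ^ (1 / (α + 1)) - 1)) / τ ^ (α + 1)
          - (s + S) / τ ^ α
        < (s + S) / (τ + t) ^ α + α * s * t / τ ^ (α + 1) - (s + S) / τ ^ α := by
  set K : ℝ := 1 + S / s
  set T : ℝ := τ * (K ^ (1 / (α + 1)) - 1)
  have hK : 1 ≤ K := le_add_of_nonneg_right (div_nonneg hS hs.le)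
  have hT : 0 ≤ T := mul_nonneg hτ.le (sub_nonneg.2 (one_le_rpow hK (by positivity)))
  refine ⟨hT, fun t (ht : 0 ≤ t) htT => ?_⟩
  have hcrit : α * s / τ ^ (α + 1) * (τ + T) ^ (α + 1) = α * (s + S) := by
    have hτT : τ + T = τ * K ^ (1 / (α + 1)) := by ring
    rw [hτT, mul_rpow hτ.le (by positivity), ← rpow_mul (by positivity),
      one_div_mul_cancel (by positivity), rpow_one]
    simp only [K]
    field_simp
  have hmin := div_rpow_add_mul_lt_of_critical (u := τ + t) (by positivity) hα
    (by positivity) (by positivity) (fun h => htT (add_left_cancel h)) hcrit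
  have hlin : ∀ x, α * s * x / τ ^ (α + 1) = α * s / τ ^ (α + 1) * x := fun x => by ring
  rw [hlin, hlin]
  linarith
end
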